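/- Under assumptions A1 and A3-i, for any step size λ with 0 < λ < 1/(4μ), the paired tIPLAc iterates V_n^{i,λ,c} = (θ_n^{λ,c}, X_n^{i,λ,c}) satisfy, for all n ∈ ℕ and all i ∈ {1,…,N}, E[|V_n^{i,λ,c}|²] ≤ ( |V_0^{i,λ,c}|² + (8/μ)(b + 1) ) (1 + d^θ + d^x), where b = |h(0)|²/(2μ); in particular the second moments are bounded by a constant times (1 + d^θ + d^x), with constant independent of N, n, λ, d^x and d^θ. -/

import Mathlib

open Real MeasureTheory ProbabilityTheory

/-- Combine a `θ`-component and an `x`-component into a single Euclidean vector. -/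
noncomputable def pairVec {dθ dx : ℕ} (θ : EuclideanSpace ℝ (Fin dθ))
    (x : EuclideanSpace ℝ (Fin dx)) : EuclideanSpace ℝ (Fin dθ ⊕ Fin dx) :=
  WithLp.toLp 2 (fun j => Sum.elim (fun a => θ a) (fun b => x b) j)

/-- `θ`-part of a vector in `ℝ^{dθ+dx}`. -/
noncomputable def thPart {dθ dx : ℕ} (w : EuclideanSpace ℝ (Fin dθ ⊕ Fin dx)) :
    EuclideanSpace ℝ (Fin dθ) := WithLp.toLp 2 (fun a => w (Sum.inl a))

/-- `x`-part of a vector in `ℝ^{dθ+dx}`. -/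
noncomputable def xPart {dθ dx : ℕ} (w : EuclideanSpace ℝ (Fin dθ ⊕ Fin dx)) :
    EuclideanSpace ℝ (Fin dx) := WithLp.toLp 2 (fun b => w (Sum.inr b))

/-- The coordinate-wise taming `h_{λ,c}` of `h`:
`(h_{λ,c}(v))_i = (h_i(v) − μ v_i)/(1 + λ^{1/2} |h_i(v) − μ v_i|) + μ v_i`. -/
noncomputable def tameCW {ι : Type*} [Fintype ι]
    (h : EuclideanSpace ℝ ι → EuclideanSpace ℝ ι) (μ lam : ℝ)
    (v : EuclideanSpace ℝ ι) : EuclideanSpace ℝ ι :=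
  WithLp.toLp 2 (fun i => (h v i - μ * v i) / (1 + Real.sqrt lam * |h v i - μ * v i|) + μ * v i)

/-- The `θ`-component of the Gaussian noise at step `n`. -/
noncomputable def noiseθ {dθ dx N : ℕ} {Ω : Type*}
    (G : ℕ × (Fin dθ ⊕ Fin N × Fin dx) → Ω → ℝ) (n : ℕ) (ω : Ω) :
    EuclideanSpace ℝ (Fin dθ) := WithLp.toLp 2 (fun a => G (n, Sum.inl a) ω)

/-- The `x`-component of the Gaussian noise of particle `i` at step `n`. -/
noncomputable def noiseX {dθ dx N : ℕ} {Ω : Type*}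
    (G : ℕ × (Fin dθ ⊕ Fin N × Fin dx) → Ω → ℝ) (i : Fin N) (n : ℕ) (ω : Ω) :
    EuclideanSpace ℝ (Fin dx) := WithLp.toLp 2 (fun b => G (n, Sum.inr (i, b)) ω)

/-! ### Auxiliary lemmas: Gaussian moments -/

section GaussAux
open Filter Set
open scoped ENNReal NNReal

private lemma tipla_rpow2 (x : ℝ) : x ^ (2:ℝ) = x ^ 2 := by
  rw [show ((2:ℝ)) = ((2:ℕ):ℝ) by norm_num, Real.rpow_natCast]

private lemma tipla_integrable_sq_gauss :
    Integrable (fun x : ℝ => x ^ 2 * rexp (-(2⁻¹ * x ^ 2))) := by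
  have h := integrable_rpow_mul_exp_neg_mul_sq (by norm_num : (0:ℝ) < 2⁻¹)
    (by norm_num : (-1:ℝ) < 2)
  simpa [tipla_rpow2, neg_mul] using h

private lemma tipla_integrable_gauss :
    Integrable (fun x : ℝ => rexp (-(2⁻¹ * x ^ 2))) := by
  have h := integrable_exp_neg_mul_sq (by norm_num : (0:ℝ) < 2⁻¹)
  simpa [neg_mul] using h

private lemma tipla_gauss_parts :
    ∫ x in Ioi (0:ℝ), (x ^ 2 * rexp (-(2⁻¹ * x ^ 2)) - rexp (-(2⁻¹ * x ^ 2))) = 0 := by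
  have hderiv : ∀ x ∈ Ioi (0:ℝ), HasDerivAt (fun y : ℝ => -(y * rexp (-(2⁻¹ * y ^ 2))))
      (x ^ 2 * rexp (-(2⁻¹ * x ^ 2)) - rexp (-(2⁻¹ * x ^ 2))) x := by
    intro x _
    have h1 : HasDerivAt (fun y : ℝ => -(2⁻¹ * y ^ 2)) (-x) x := by
      have := ((hasDerivAt_pow 2 x).const_mul (2⁻¹ : ℝ)).neg
      exact this.congr_deriv (by simp)
    have h3 := ((hasDerivAt_id x).mul (h1.exp)).neg
    refine h3.congr_deriv ?_
    simp only [id]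
    ring
  have hcont : ContinuousWithinAt (fun y : ℝ => -(y * rexp (-(2⁻¹ * y ^ 2)))) (Ici 0) 0 := by
    apply Continuous.continuousWithinAt
    continuity
  have hint : IntegrableOn
      (fun x : ℝ => x ^ 2 * rexp (-(2⁻¹ * x ^ 2)) - rexp (-(2⁻¹ * x ^ 2))) (Ioi 0) :=
    (tipla_integrable_sq_gauss.sub tipla_integrable_gauss).integrableOn
  have htend : Tendsto (fun y : ℝ => -(y * rexp (-(2⁻¹ * y ^ 2)))) atTop (nhds 0) := by
    have ho := rpow_mul_exp_neg_mul_sq_isLittleO_exp_neg (by norm_num : (0:ℝ) < 2⁻¹) 1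
    have h0 : Tendsto (fun y : ℝ => y ^ (1:ℝ) * rexp (-2⁻¹ * y ^ 2)) atTop (nhds 0) := by
      refine ho.trans_tendsto ?_
      have h1 : Tendsto (fun x : ℝ => (2⁻¹ : ℝ) * x) atTop atTop :=
        Tendsto.const_mul_atTop (by norm_num) tendsto_id
      have h2 := tendsto_exp_neg_atTop_nhds_zero.comp h1
      refine h2.congr fun x => ?_
      norm_num [neg_mul]
    have : Tendsto (fun y : ℝ => y * rexp (-(2⁻¹ * y ^ 2))) atTop (nhds 0) := by
      refine h0.congr fun y => ?_
      rw [Real.rpow_one, neg_mul]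
    simpa using this.neg
  have := integral_Ioi_of_hasDerivAt_of_tendsto hcont hderiv hint htend
  simpa using this

private lemma tipla_integral_sq_gauss :
    ∫ x : ℝ, x ^ 2 * rexp (-(2⁻¹ * x ^ 2)) = Real.sqrt (2 * π) := by
  have heven : ∫ x : ℝ, (x ^ 2 * rexp (-(2⁻¹ * x ^ 2)) - rexp (-(2⁻¹ * x ^ 2))) = 0 := by
    set g : ℝ → ℝ := fun x => x ^ 2 * rexp (-(2⁻¹ * x ^ 2)) - rexp (-(2⁻¹ * x ^ 2)) with hg
    have hgint : Integrable g := tipla_integrable_sq_gauss.sub tipla_integrable_gauss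
    have hsplit : ∫ x, g x = (∫ x in Iic (0:ℝ), g x) + ∫ x in Ioi (0:ℝ), g x :=
      (intervalIntegral.integral_Iic_add_Ioi hgint.integrableOn hgint.integrableOn).symm
    have hIic : ∫ x in Iic (0:ℝ), g x = ∫ x in Ioi (0:ℝ), g x := by
      have h := integral_comp_neg_Ioi (c := (0:ℝ)) g
      rw [neg_zero] at h
      rw [← h]
      congr 1 with x
      simp [hg, neg_sq]
    rw [hsplit, hIic, tipla_gauss_parts]
    norm_num
  have h2 : ∫ x : ℝ, rexp (-(2⁻¹ * x ^ 2)) = Real.sqrt (2 * π) := by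
    have h0 := integral_gaussian (2⁻¹ : ℝ)
    have h : (fun x : ℝ => rexp (-2⁻¹ * x ^ 2)) = fun x : ℝ => rexp (-(2⁻¹ * x ^ 2)) := by
      funext x; rw [neg_mul]
    rw [h] at h0
    rw [h0, show π / 2⁻¹ = 2 * π by ring]
  have hs : (∫ x : ℝ, x ^ 2 * rexp (-(2⁻¹ * x ^ 2))) - ∫ x : ℝ, rexp (-(2⁻¹ * x ^ 2)) = 0 := by
    rw [← integral_sub tipla_integrable_sq_gauss tipla_integrable_gauss]
    exact heven
  have := sub_eq_zero.mp hs
  rw [this, h2]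

private lemma tipla_gaussianPDFReal_zero_one (x : ℝ) :
    gaussianPDFReal 0 1 x = (Real.sqrt (2 * π))⁻¹ * rexp (-(2⁻¹ * x ^ 2)) := by
  simp only [gaussianPDFReal, NNReal.coe_one, mul_one, sub_zero]
  congr 1
  ring

private lemma tipla_gaussianReal_wd : gaussianReal 0 1
    = MeasureTheory.volume.withDensity (fun x => ((gaussianPDFReal 0 1 x).toNNReal : ENNReal)) := by
  rw [gaussianReal_of_var_ne_zero 0 one_ne_zero]
  rfl

private lemma tipla_integral_gaussianReal01 (g : ℝ → ℝ) :
    ∫ x, g x ∂(gaussianReal 0 1) = ∫ x, gaussianPDFReal 0 1 x * g x := by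
  rw [tipla_gaussianReal_wd, integral_withDensity_eq_integral_smul
    ((measurable_gaussianPDFReal 0 1).real_toNNReal) g]
  congr 1 with x
  rw [NNReal.smul_def, Real.coe_toNNReal _ (gaussianPDFReal_nonneg 0 1 x), smul_eq_mul]

private lemma tipla_integral_id_gaussianReal01 : ∫ x, x ∂(gaussianReal 0 1) = 0 := by
  rw [tipla_integral_gaussianReal01]
  have h := integral_neg_eq_self (fun x : ℝ => gaussianPDFReal 0 1 x * x) MeasureTheory.volume
  have h2 : ∫ x : ℝ, gaussianPDFReal 0 1 (-x) * (-x) = - ∫ x : ℝ, gaussianPDFReal 0 1 x * x := by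
    rw [← integral_neg]
    congr 1 with x
    rw [tipla_gaussianPDFReal_zero_one, tipla_gaussianPDFReal_zero_one, neg_sq]
    ring
  rw [h2] at h
  linarith [h]

private lemma tipla_integral_sq_gaussianReal01 : ∫ x, x ^ 2 ∂(gaussianReal 0 1) = 1 := by
  rw [tipla_integral_gaussianReal01]
  have : ∀ x : ℝ, gaussianPDFReal 0 1 x * x ^ 2
      = (Real.sqrt (2 * π))⁻¹ * (x ^ 2 * rexp (-(2⁻¹ * x ^ 2))) := by
    intro x; rw [tipla_gaussianPDFReal_zero_one]; ring
  rw [funext this, integral_const_mul, tipla_integral_sq_gauss]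
  rw [inv_mul_cancel₀]
  positivity

private lemma tipla_integrable_sq_gaussianReal01 :
    Integrable (fun x : ℝ => x ^ 2) (gaussianReal 0 1) := by
  rw [tipla_gaussianReal_wd, integrable_withDensity_iff_integrable_smul
    ((measurable_gaussianPDFReal 0 1).real_toNNReal)]
  have : (fun x : ℝ => (gaussianPDFReal 0 1 x).toNNReal • x ^ 2)
      = fun x : ℝ => (Real.sqrt (2 * π))⁻¹ * (x ^ 2 * rexp (-(2⁻¹ * x ^ 2))) := by
    funext x
    rw [NNReal.smul_def, Real.coe_toNNReal _ (gaussianPDFReal_nonneg 0 1 x), smul_eq_mul,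
      tipla_gaussianPDFReal_zero_one]
    ring
  rw [this]
  exact tipla_integrable_sq_gauss.const_mul _

private lemma tipla_memℒp_two_id_gaussianReal01 :
    MemLp (fun x : ℝ => x) 2 (gaussianReal 0 1) := by
  rw [memLp_two_iff_integrable_sq (f := fun x : ℝ => x) measurable_id.aestronglyMeasurable]
  exact tipla_integrable_sq_gaussianReal01

variable {Ω : Type*} [MeasurableSpace Ω] {P : Measure Ω} {ξ : Ω → ℝ}

private lemma tipla_memℒp_of_gauss (hm : Measurable ξ)
    (hl : Measure.map ξ P = gaussianReal 0 1) : MemLp ξ 2 P := by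
  have := (memLp_map_measure_iff (μ := P) (f := ξ) (g := fun x : ℝ => x) (p := 2)
    measurable_id.aestronglyMeasurable hm.aemeasurable).mp
  rw [hl] at this
  exact this tipla_memℒp_two_id_gaussianReal01

private lemma tipla_mean_of_gauss (hm : Measurable ξ)
    (hl : Measure.map ξ P = gaussianReal 0 1) : ∫ ω, ξ ω ∂P = 0 := by
  have h := integral_map (μ := P) (φ := ξ) (f := fun x : ℝ => x) hm.aemeasurable
    measurable_id.aestronglyMeasurable
  rw [hl] at h
  rw [← h, tipla_integral_id_gaussianReal01]

private lemma tipla_var_of_gauss (hm : Measurable ξ)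
    (hl : Measure.map ξ P = gaussianReal 0 1) : ∫ ω, (ξ ω) ^ 2 ∂P = 1 := by
  have h := integral_map (μ := P) (φ := ξ) (f := fun x : ℝ => x ^ 2) hm.aemeasurable
    (measurable_id.pow_const 2).aestronglyMeasurable
  rw [hl] at h
  rw [← h, tipla_integral_sq_gaussianReal01]

end GaussAux

/-! ### Auxiliary lemmas: deterministic estimates on the tamed coefficient -/

section TameAux
variable {ι : Type*} [Fintype ι] (h : EuclideanSpace ℝ ι → EuclideanSpace ℝ ι) (μ lam : ℝ)

private lemma tipla_tame_sub_bound (hlam0 : 0 < lam) (v : EuclideanSpace ℝ ι) (j : ι) :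
    |tameCW h μ lam v j - μ * v j| ≤ (Real.sqrt lam)⁻¹ := by
  set g := h v j - μ * v j with hg
  have hs : 0 < Real.sqrt lam := Real.sqrt_pos.mpr hlam0
  have hD : (0:ℝ) < 1 + Real.sqrt lam * |g| := by positivity
  have : tameCW h μ lam v j - μ * v j = g / (1 + Real.sqrt lam * |g|) := by
    simp [tameCW, hg]
  rw [this, abs_div, abs_of_pos hD, div_le_iff₀ hD]
  have h1 : (Real.sqrt lam)⁻¹ * (Real.sqrt lam * |g|) = |g| := by
    field_simp
  have h2 : (0:ℝ) < (Real.sqrt lam)⁻¹ := by positivity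
  nlinarith [abs_nonneg g]

private lemma tipla_tame_abs_le (hμ : 0 < μ) (hlam0 : 0 < lam) (v : EuclideanSpace ℝ ι) (j : ι) :
    |tameCW h μ lam v j| ≤ (Real.sqrt lam)⁻¹ + μ * |v j| := by
  have h1 := tipla_tame_sub_bound h μ lam hlam0 v j
  have h2 : |tameCW h μ lam v j| ≤ |tameCW h μ lam v j - μ * v j| + |μ * v j| := by
    have := abs_add_le (tameCW h μ lam v j - μ * v j) (μ * v j)
    simpa using this
  have h3 : |μ * v j| = μ * |v j| := by
    rw [abs_mul, abs_of_pos hμ]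
  linarith

private lemma tipla_tame_drift (hμ : 0 < μ)
    (hA3 : ∀ v : EuclideanSpace ℝ ι, ∀ j : ι,
      h v j * v j ≥ μ / 2 * (v j) ^ 2 - 1 / (2 * μ) * (h 0 j) ^ 2)
    (v : EuclideanSpace ℝ ι) (j : ι) :
    μ / 2 * (v j) ^ 2 - 1 / (2 * μ) * (h 0 j) ^ 2 ≤ tameCW h μ lam v j * v j := by
  set g := h v j - μ * v j with hg
  have hs : 0 ≤ Real.sqrt lam := Real.sqrt_nonneg lam
  have hD : (1:ℝ) ≤ 1 + Real.sqrt lam * |g| :=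
    le_add_of_nonneg_right (mul_nonneg hs (abs_nonneg g))
  have hD0 : (0:ℝ) < 1 + Real.sqrt lam * |g| := by positivity
  have hexp : tameCW h μ lam v j * v j
      = g * v j / (1 + Real.sqrt lam * |g|) + μ * (v j) ^ 2 := by
    simp only [tameCW, ← hg]
    ring
  have hA := hA3 v j
  have hb : 0 ≤ 1 / (2 * μ) * (h 0 j) ^ 2 := by positivity
  rcases le_or_gt 0 (g * v j) with hgv | hgv
  · have hnn : 0 ≤ g * v j / (1 + Real.sqrt lam * |g|) := div_nonneg hgv (le_of_lt hD0)
    have hmu : μ / 2 * (v j) ^ 2 ≤ μ * (v j) ^ 2 := by nlinarith [sq_nonneg (v j)]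
    rw [hexp]
    linarith
  · have hge : g * v j ≤ g * v j / (1 + Real.sqrt lam * |g|) := by
      rw [le_div_iff₀ hD0]
      nlinarith
    have hhv : g * v j + μ * (v j) ^ 2 = h v j * v j := by rw [hg]; ring
    nlinarith

private lemma tipla_measurable_tame (hh : Measurable h) (j : ι) :
    Measurable (fun v : EuclideanSpace ℝ ι => tameCW h μ lam v j) := by
  have h1 : Measurable fun v : EuclideanSpace ℝ ι => h v j :=
    (measurable_pi_apply j).comp ((WithLp.measurable_ofLp 2 _).comp hh)
  have h2 : Measurable fun v : EuclideanSpace ℝ ι => v j := (measurable_pi_apply j).comp (WithLp.measurable_ofLp 2 _)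
  exact ((h1.sub (h2.const_mul μ)).div
    (measurable_const.add ((h1.sub (h2.const_mul μ)).abs.const_mul (Real.sqrt lam)))).add
    (h2.const_mul μ)

private lemma tipla_cont_of_A1 {L ℓ : ℝ} (hℓ : 0 < ℓ)
    (hA1 : ∀ v v' : EuclideanSpace ℝ ι, ‖h v - h v'‖ ≤ L * (1 + ‖v‖ ^ ℓ + ‖v'‖ ^ ℓ) * ‖v - v'‖) :
    Continuous h := by
  rw [continuous_iff_continuousAt]
  intro v
  rw [ContinuousAt, tendsto_iff_dist_tendsto_zero]
  have hb : Filter.Tendsto (fun v' : EuclideanSpace ℝ ι =>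
      L * (1 + ‖v'‖ ^ ℓ + ‖v‖ ^ ℓ) * ‖v' - v‖) (nhds v) (nhds 0) := by
    have hr : ContinuousAt (fun x : ℝ => x ^ ℓ) ‖v‖ :=
      Real.continuousAt_rpow_const _ _ (Or.inr hℓ.le)
    have h1 : ContinuousAt (fun v' : EuclideanSpace ℝ ι =>
        L * (1 + ‖v'‖ ^ ℓ + ‖v‖ ^ ℓ)) v := by
      exact continuousAt_const.mul ((continuousAt_const.add
        (hr.comp continuous_norm.continuousAt)).add continuousAt_const)
    have h2 : Filter.Tendsto (fun v' : EuclideanSpace ℝ ι => ‖v' - v‖) (nhds v) (nhds 0) := by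
      have hc : Continuous fun v' : EuclideanSpace ℝ ι => ‖v' - v‖ :=
        (continuous_id.sub continuous_const).norm
      have := hc.tendsto v
      simpa using this
    have := h1.tendsto.mul h2
    simpa using this
  refine squeeze_zero (fun t => dist_nonneg) (fun v' => ?_) hb
  rw [dist_eq_norm]
  exact hA1 v' v

end TameAux

/-! ### Auxiliary lemmas: probabilistic one-step estimate -/

section ProbAux
variable {Ω : Type*} [MeasurableSpace Ω] {P : Measure Ω} [IsProbabilityMeasure P]

private lemma tipla_expect_step {A ξ : Ω → ℝ} (c : ℝ) (hA : MemLp A 2 P) (hξ : MemLp ξ 2 P)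
    (hind : IndepFun A ξ P) (hm : ∫ ω, ξ ω ∂P = 0) (hv : ∫ ω, (ξ ω) ^ 2 ∂P = 1) :
    ∫ ω, (A ω + c * ξ ω) ^ 2 ∂P = (∫ ω, (A ω) ^ 2 ∂P) + c ^ 2 := by
  have hAi : Integrable A P := hA.integrable one_le_two
  have hξi : Integrable ξ P := hξ.integrable one_le_two
  have hint_mul : Integrable (fun ω => A ω * ξ ω) P := hind.integrable_mul hAi hξi
  have hA2 := hA.integrable_sq
  have hξ2 := hξ.integrable_sq
  have hmul0 : ∫ ω, A ω * ξ ω ∂P = 0 := by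
    have := hind.integral_fun_mul_eq_mul_integral hAi.1 hξi.1
    simpa [hm] using this
  have expand : (fun ω => (A ω + c * ξ ω) ^ 2)
      = fun ω => (A ω) ^ 2 + ((2 * c) * (A ω * ξ ω) + c ^ 2 * (ξ ω) ^ 2) := by
    funext ω; ring
  have hg1 : Integrable (fun ω => (2 * c) * (A ω * ξ ω)) P := hint_mul.const_mul (2 * c)
  have hg2 : Integrable (fun ω => c ^ 2 * (ξ ω) ^ 2) P := hξ2.const_mul (c ^ 2)
  have hg : Integrable (fun ω => (2 * c) * (A ω * ξ ω) + c ^ 2 * (ξ ω) ^ 2) P := hg1.add hg2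
  rw [expand, integral_add hA2 hg, integral_add hg1 hg2,
    integral_const_mul, integral_const_mul, hmul0, hv]
  ring

private lemma tipla_indep_from_past {ι : Type*} {G : ι → Ω → ℝ} (hGmeas : ∀ i, Measurable (G i))
    (hG : iIndepFun G P) (S : Set ι) {j : ι} (hj : j ∉ S)
    {A : Ω → ℝ}
    (hA : Measurable[⨆ i ∈ S, MeasurableSpace.comap (G i) inferInstance] A) :
    IndepFun A (G j) P := by
  rw [IndepFun_iff_Indep]
  have h1 : Indep (⨆ i ∈ S, MeasurableSpace.comap (G i) inferInstance)
      (⨆ i ∈ Sᶜ, MeasurableSpace.comap (G i) inferInstance) P := by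
    refine indep_biSup_compl (fun i => ?_) ?_ S
    · exact measurable_iff_comap_le.mp (hGmeas i)
    · exact (iIndepFun_iff_iIndep _ _ _).mp hG
  refine indep_of_indep_of_le_right (indep_of_indep_of_le_left h1 ?_) ?_
  · exact measurable_iff_comap_le.mp hA
  · exact le_biSup (fun i => MeasurableSpace.comap (G i) inferInstance)
      (show j ∈ Sᶜ from hj)

end ProbAux

/-! ### Auxiliary lemma: the key algebraic one-step inequality -/

private lemma tipla_key_alg (μ lam u W bj : ℝ) (hμ : 0 < μ) (hlam0 : 0 < lam)
    (hlm : lam * μ ≤ 1/4)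
    (hdrift : μ / 2 * u ^ 2 - bj ≤ W * u)
    (hbd : |W| ≤ (Real.sqrt lam)⁻¹ + μ * |u|) :
    (u - lam * W) ^ 2 ≤ (1 - lam * μ / 2) * u ^ 2 + lam * (2 * bj + 2) := by
  have hs : 0 < Real.sqrt lam := Real.sqrt_pos.mpr hlam0
  have hsq : ((Real.sqrt lam)⁻¹) ^ 2 = lam⁻¹ := by
    rw [← one_div, div_pow, one_pow, Real.sq_sqrt hlam0.le, one_div]
  have hW2 : W ^ 2 ≤ 2 * lam⁻¹ + 2 * μ ^ 2 * u ^ 2 := by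
    have h1 : W ^ 2 ≤ ((Real.sqrt lam)⁻¹ + μ * |u|) ^ 2 := by
      rw [← sq_abs W]
      apply pow_le_pow_left₀ (abs_nonneg W) hbd
    have h2 : ((Real.sqrt lam)⁻¹ + μ * |u|) ^ 2
        ≤ 2 * lam⁻¹ + 2 * μ ^ 2 * u ^ 2 := by
      nlinarith [sq_nonneg ((Real.sqrt lam)⁻¹ - μ * |u|), sq_abs u, hsq]
    linarith
  have haux : lam ^ 2 * W ^ 2 ≤ 2 * lam + 2 * lam ^ 2 * μ ^ 2 * u ^ 2 := by
    have h3 := mul_le_mul_of_nonneg_left hW2 (sq_nonneg lam)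
    have h4 : lam ^ 2 * (2 * lam⁻¹) = 2 * lam := by
      field_simp
    nlinarith
  nlinarith [mul_le_mul_of_nonneg_left hdrift (by positivity : (0:ℝ) ≤ 2 * lam),
    mul_pos hlam0 hμ, sq_nonneg u,
    mul_le_mul_of_nonneg_right hlm (mul_nonneg (mul_pos hlam0 hμ).le (sq_nonneg u))]

/-! ### Sum-application helper for Euclidean space -/

private lemma tipla_sum_apply {ι κ : Type*} [Fintype ι] (s : Finset κ)
    (f : κ → EuclideanSpace ℝ ι) (a : ι) : (∑ i ∈ s, f i) a = ∑ i ∈ s, f i a := by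
  classical
  induction s using Finset.cons_induction with
  | empty => rfl
  | cons j s hj ih =>
    rw [Finset.sum_cons, Finset.sum_cons, ← ih]
    rfl

private lemma tipla_memℒp_tame {ι : Type*} [Fintype ι]
    (h : EuclideanSpace ℝ ι → EuclideanSpace ℝ ι) (μ lam : ℝ) (hμ : 0 < μ) (hlam0 : 0 < lam)
    {Ω : Type*} [MeasurableSpace Ω] {P : Measure Ω} [IsProbabilityMeasure P]
    {V : Ω → EuclideanSpace ℝ ι} (j : ι)
    (hmeas : Measurable fun ω => tameCW h μ lam (V ω) j)
    (hVl : MemLp (fun ω => V ω j) 2 P) :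
    MemLp (fun ω => tameCW h μ lam (V ω) j) 2 P := by
  have habs : MemLp (fun ω => |V ω j|) 2 P := by
    have := hVl.norm
    simpa [Real.norm_eq_abs] using this
  have hg : MemLp (fun ω => (Real.sqrt lam)⁻¹ + μ * |V ω j|) 2 P :=
    (memLp_const ((Real.sqrt lam)⁻¹)).add (habs.const_mul μ)
  refine hg.of_le hmeas.aestronglyMeasurable (Filter.Eventually.of_forall fun ω => ?_)
  rw [Real.norm_eq_abs, Real.norm_eq_abs]
  have h1 := tipla_tame_abs_le h μ lam hμ hlam0 (V ω) j
  have hs : 0 < Real.sqrt lam := Real.sqrt_pos.mpr hlam0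
  have h2 : abs ((Real.sqrt lam)⁻¹ + μ * |V ω j|)
      = (Real.sqrt lam)⁻¹ + μ * |V ω j| := by
    refine abs_of_nonneg ?_
    positivity
  rw [h2]
  exact h1

private lemma tipla_pair_measurable {dθ dx : ℕ} {Ω : Type*} [mΩ : MeasurableSpace Ω]
    {f : Ω → EuclideanSpace ℝ (Fin dθ)} {g : Ω → EuclideanSpace ℝ (Fin dx)}
    (hf : ∀ a, Measurable fun ω => f ω a) (hg : ∀ b, Measurable fun ω => g ω b) :
    Measurable fun ω => pairVec (f ω) (g ω) := by
  refine (WithLp.measurable_toLp 2 _).comp (measurable_pi_iff.mpr fun j => ?_)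
  cases j with
  | inl a => exact hf a
  | inr b => exact hg b

set_option maxHeartbeats 2000000 in
/-- Lemma 5 of the paper: uniform-in-`n` second moment bound for the paired
tIPLAc iterates `V_n^{i,λ,c} = (θ_n^{λ,c}, X_n^{i,λ,c})`. -/
theorem stmt_19 (dθ dx N : ℕ) (hdθ : 0 < dθ) (hdx : 0 < dx) (hN : 0 < N)
    (h : EuclideanSpace ℝ (Fin dθ ⊕ Fin dx) → EuclideanSpace ℝ (Fin dθ ⊕ Fin dx))
    (L ℓ μ : ℝ) (hL : 0 < L) (hℓ : 0 < ℓ) (hμ : 0 < μ)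
    (hA1 : ∀ v v' : EuclideanSpace ℝ (Fin dθ ⊕ Fin dx),
      ‖h v - h v'‖ ≤ L * (1 + ‖v‖ ^ ℓ + ‖v'‖ ^ ℓ) * ‖v - v'‖)
    (hA3i : ∀ v : EuclideanSpace ℝ (Fin dθ ⊕ Fin dx), ∀ j : Fin dθ ⊕ Fin dx,
      h v j * v j ≥ μ / 2 * (v j) ^ 2 - 1 / (2 * μ) * (h 0 j) ^ 2)
    (lam : ℝ) (hlam0 : 0 < lam) (hlam : lam < 1 / (4 * μ))
    (Ω : Type*) [MeasurableSpace Ω] (P : Measure Ω) [IsProbabilityMeasure P]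
    (G : ℕ × (Fin dθ ⊕ Fin N × Fin dx) → Ω → ℝ)
    (hGmeas : ∀ idx, Measurable (G idx))
    (hGindep : iIndepFun G P)
    (hGlaw : ∀ idx, Measure.map (G idx) P = gaussianReal 0 1)
    (θ0 : EuclideanSpace ℝ (Fin dθ)) (x0 : Fin N → EuclideanSpace ℝ (Fin dx))
    (Θ : ℕ → Ω → EuclideanSpace ℝ (Fin dθ))
    (X : ℕ → Fin N → Ω → EuclideanSpace ℝ (Fin dx))
    (hΘ0 : ∀ ω, Θ 0 ω = θ0) (hX0 : ∀ i ω, X 0 i ω = x0 i)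
    (hΘrec : ∀ n ω, Θ (n + 1) ω =
      Θ n ω
        - (lam / (N : ℝ)) •
            ∑ i : Fin N, thPart (tameCW h μ lam (pairVec (Θ n ω) (X n i ω)))
        + Real.sqrt (2 * lam / (N : ℝ)) • noiseθ G (n + 1) ω)
    (hXrec : ∀ n (i : Fin N) ω, X (n + 1) i ω =
      X n i ω
        - lam • xPart (tameCW h μ lam (pairVec (Θ n ω) (X n i ω)))
        + Real.sqrt (2 * lam) • noiseX G i (n + 1) ω) :
    ∀ (n : ℕ) (i : Fin N),
      (∫⁻ ω, ENNReal.ofReal (‖Θ n ω‖ ^ 2 + ‖X n i ω‖ ^ 2) ∂P)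
        ≤ ENNReal.ofReal
            ((‖θ0‖ ^ 2 + ‖x0 i‖ ^ 2 + (8 / μ) * (‖h 0‖ ^ 2 / (2 * μ) + 1))
              * (1 + (dθ : ℝ) + dx)) := by
  classical
  -- basic facts
  have hNR : (0:ℝ) < (N:ℝ) := by exact_mod_cast hN
  have hN1 : (1:ℝ) ≤ (N:ℝ) := by exact_mod_cast hN
  have hlm : lam * μ ≤ 1/4 := by
    have h1 : lam * (4 * μ) < (1 / (4 * μ)) * (4 * μ) :=
      mul_lt_mul_of_pos_right hlam (by positivity)
    rw [div_mul_cancel₀ 1 (by positivity : (4 * μ : ℝ) ≠ 0)] at h1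
    nlinarith
  have hconth : Continuous h := tipla_cont_of_A1 h hℓ hA1
  have hmeash : Measurable h := hconth.measurable
  -- the past filtration
  set m : ℕ → MeasurableSpace Ω := fun n =>
    ⨆ idx ∈ {p : ℕ × (Fin dθ ⊕ Fin N × Fin dx) | p.1 ≤ n},
      MeasurableSpace.comap (G idx) inferInstance with hm
  have hmle : ∀ n, m n ≤ ‹MeasurableSpace Ω› := by
    intro n
    refine iSup₂_le fun idx _ => measurable_iff_comap_le.mp (hGmeas idx)
  have hmmono : ∀ n, m n ≤ m (n + 1) := by
    intro n
    exact biSup_mono fun p hp => le_trans hp (Nat.le_succ n)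
  -- the tamed drift along the trajectories
  set T : ℕ → Fin N → Ω → EuclideanSpace ℝ (Fin dθ ⊕ Fin dx) :=
    fun n i ω => tameCW h μ lam (pairVec (Θ n ω) (X n i ω)) with hT
  -- coordinatewise recursions
  have hθcoord : ∀ n a ω, Θ (n+1) ω a
      = (Θ n ω a - (lam / (N:ℝ)) * ∑ i : Fin N, T n i ω (Sum.inl a))
        + Real.sqrt (2 * lam / (N:ℝ)) * G (n+1, Sum.inl a) ω := by
    intro n a ω
    rw [hΘrec n ω]
    show (Θ n ω - (lam / (N:ℝ)) • ∑ i : Fin N, thPart (T n i ω)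
      + Real.sqrt (2 * lam / (N:ℝ)) • noiseθ G (n+1) ω) a = _
    rw [PiLp.add_apply, PiLp.sub_apply, PiLp.smul_apply, PiLp.smul_apply]
    rw [tipla_sum_apply]
    simp only [smul_eq_mul, thPart, noiseθ]
  have hxcoord : ∀ n (i : Fin N) b ω, X (n+1) i ω b
      = (X n i ω b - lam * T n i ω (Sum.inr b))
        + Real.sqrt (2 * lam) * G (n+1, Sum.inr (i, b)) ω := by
    intro n i b ω
    rw [hXrec n i ω]
    show (X n i ω - lam • xPart (T n i ω)
      + Real.sqrt (2 * lam) • noiseX G i (n+1) ω) b = _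
    rw [PiLp.add_apply, PiLp.sub_apply, PiLp.smul_apply, PiLp.smul_apply]
    simp only [smul_eq_mul, xPart, noiseX]
  have hGm1 : ∀ n (j : Fin dθ ⊕ Fin N × Fin dx), Measurable[m (n+1)] (G (n+1, j)) := by
    intro n j
    have : MeasurableSpace.comap (G (n+1, j)) inferInstance ≤ m (n+1) := by
      rw [hm]
      exact le_biSup (fun idx => MeasurableSpace.comap (G idx) inferInstance)
        (show ((n+1 : ℕ), j) ∈ {p : ℕ × (Fin dθ ⊕ Fin N × Fin dx) | p.1 ≤ n + 1}
          from Set.mem_setOf.mpr le_rfl)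
    exact measurable_iff_comap_le.mpr this
  -- invariant: coordinate measurability and square-integrability
  have inv : ∀ n, (∀ a, Measurable[m n] fun ω => Θ n ω a)
      ∧ (∀ i b, Measurable[m n] fun ω => X n i ω b)
      ∧ (∀ a, MemLp (fun ω => Θ n ω a) 2 P)
      ∧ (∀ i b, MemLp (fun ω => X n i ω b) 2 P) := by
    intro n
    induction n with
    | zero =>
      refine ⟨fun a => ?_, fun i b => ?_, fun a => ?_, fun i b => ?_⟩
      · have : (fun ω => Θ 0 ω a) = fun _ => θ0 a := by funext ω; rw [hΘ0]
        rw [this]; exact measurable_const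
      · have : (fun ω => X 0 i ω b) = fun _ => x0 i b := by funext ω; rw [hX0]
        rw [this]; exact measurable_const
      · have : (fun ω => Θ 0 ω a) = fun _ => θ0 a := by funext ω; rw [hΘ0]
        rw [this]; exact memLp_const _
      · have : (fun ω => X 0 i ω b) = fun _ => x0 i b := by funext ω; rw [hX0]
        rw [this]; exact memLp_const _
    | succ n ih =>
      obtain ⟨ihθm, ihxm, ihθl, ihxl⟩ := ih
      have hVmeas : ∀ i, Measurable[m n] fun ω => pairVec (Θ n ω) (X n i ω) := by
        intro i
        exact tipla_pair_measurable (mΩ := m n) ihθm (ihxm i)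
      have hTmeas : ∀ i j, Measurable[m n] fun ω => T n i ω j := by
        intro i j
        exact (tipla_measurable_tame h μ lam hmeash j).comp (hVmeas i)
      have hTmeas' : ∀ i j, Measurable fun ω => T n i ω j :=
        fun i j => (hTmeas i j).mono (hmle n) le_rfl
      have hTl : ∀ i j, MemLp (fun ω => T n i ω j) 2 P := by
        intro i j
        refine tipla_memℒp_tame h μ lam hμ hlam0 j (hTmeas' i j) ?_
        cases j with
        | inl a => exact ihθl a
        | inr b => exact ihxl i b
      refine ⟨fun a => ?_, fun i b => ?_, fun a => ?_, fun i b => ?_⟩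
      · have : (fun ω => Θ (n+1) ω a)
            = fun ω => (Θ n ω a - (lam / (N:ℝ)) * ∑ i : Fin N, T n i ω (Sum.inl a))
              + Real.sqrt (2 * lam / (N:ℝ)) * G (n+1, Sum.inl a) ω := by
          funext ω; exact hθcoord n a ω
        rw [this]
        have hmn := hmmono n
        refine Measurable.add ?_ ((hGm1 n (Sum.inl a)).const_mul _)
        refine Measurable.sub ((ihθm a).mono hmn le_rfl) ?_
        refine Measurable.const_mul ?_ _
        exact Finset.measurable_sum _ fun i _ => (hTmeas i (Sum.inl a)).mono hmn le_rfl
      · have : (fun ω => X (n+1) i ω b)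
            = fun ω => (X n i ω b - lam * T n i ω (Sum.inr b))
              + Real.sqrt (2 * lam) * G (n+1, Sum.inr (i, b)) ω := by
          funext ω; exact hxcoord n i b ω
        rw [this]
        have hmn := hmmono n
        refine Measurable.add ?_ ((hGm1 n (Sum.inr (i, b))).const_mul _)
        exact Measurable.sub ((ihxm i b).mono hmn le_rfl)
          (((hTmeas i (Sum.inr b)).mono hmn le_rfl).const_mul _)
      · have : (fun ω => Θ (n+1) ω a)
            = fun ω => (Θ n ω a - (lam / (N:ℝ)) * ∑ i : Fin N, T n i ω (Sum.inl a))
              + Real.sqrt (2 * lam / (N:ℝ)) * G (n+1, Sum.inl a) ω := by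
          funext ω; exact hθcoord n a ω
        rw [this]
        have hξl : MemLp (G (n+1, Sum.inl a)) 2 P :=
          tipla_memℒp_of_gauss (hGmeas _) (hGlaw _)
        have hsum : MemLp (fun ω => ∑ i : Fin N, T n i ω (Sum.inl a)) 2 P := by
          have h0 := memLp_finset_sum' (μ := P) (p := 2) (Finset.univ : Finset (Fin N))
            (f := fun i ω => T n i ω (Sum.inl a)) (fun i _ => hTl i (Sum.inl a))
          convert h0 using 1
          funext ω
          simp [Finset.sum_apply]
        exact ((ihθl a).sub (hsum.const_mul _)).add (hξl.const_mul _)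
      · have : (fun ω => X (n+1) i ω b)
            = fun ω => (X n i ω b - lam * T n i ω (Sum.inr b))
              + Real.sqrt (2 * lam) * G (n+1, Sum.inr (i, b)) ω := by
          funext ω; exact hxcoord n i b ω
        rw [this]
        have hξl : MemLp (G (n+1, Sum.inr (i, b))) 2 P :=
          tipla_memℒp_of_gauss (hGmeas _) (hGlaw _)
        exact ((ihxl i b).sub ((hTl i (Sum.inr b)).const_mul _)).add (hξl.const_mul _)
  -- global consequences of the invariant
  have hθl : ∀ n a, MemLp (fun ω => Θ n ω a) 2 P := fun n => (inv n).2.2.1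
  have hxl : ∀ n i b, MemLp (fun ω => X n i ω b) 2 P := fun n => (inv n).2.2.2
  have hVmeas : ∀ n i, Measurable[m n] fun ω => pairVec (Θ n ω) (X n i ω) := by
    intro n i
    exact tipla_pair_measurable (mΩ := m n) ((inv n).1) ((inv n).2.1 i)
  have hTmeas : ∀ n i j, Measurable[m n] fun ω => T n i ω j := by
    intro n i j
    exact (tipla_measurable_tame h μ lam hmeash j).comp (hVmeas n i)
  -- coordinate drift bounds along the trajectory
  have hTdrift : ∀ n (i : Fin N) ω j, μ / 2 * (pairVec (Θ n ω) (X n i ω) j) ^ 2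
      - 1 / (2 * μ) * (h 0 j) ^ 2 ≤ T n i ω j * pairVec (Θ n ω) (X n i ω) j :=
    fun n i ω j => tipla_tame_drift h μ lam hμ hA3i _ j
  have hTabs : ∀ n (i : Fin N) ω j,
      |T n i ω j| ≤ (Real.sqrt lam)⁻¹ + μ * |pairVec (Θ n ω) (X n i ω) j| :=
    fun n i ω j => tipla_tame_abs_le h μ lam hμ hlam0 _ j
  -- from here on, fix the particle index
  intro n i
  -- Lyapunov quantity
  set Sf : ℕ → ℝ := fun k =>
    (∑ a, ∫ ω, (Θ k ω a) ^ 2 ∂P) + ∑ b, ∫ ω, (X k i ω b) ^ 2 ∂P with hSf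
  set B : ℝ := ∑ j : Fin dθ ⊕ Fin dx, 1 / (2 * μ) * (h 0 j) ^ 2 with hB
  set d : ℝ := (dθ : ℝ) + dx with hd
  have hB0 : 0 ≤ B := Finset.sum_nonneg fun j _ => by positivity
  have hd1 : 1 ≤ d := by
    rw [hd]
    have h1 : (1:ℝ) ≤ (dθ:ℝ) := by exact_mod_cast hdθ
    have h2 : (0:ℝ) ≤ (dx:ℝ) := by positivity
    linarith
  -- the one-step estimate, θ coordinates
  have hθstep : ∀ k a, ∫ ω, (Θ (k+1) ω a) ^ 2 ∂P
      ≤ (1 - lam * μ / 2) * ∫ ω, (Θ k ω a) ^ 2 ∂P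
        + (lam * (2 * (1 / (2 * μ) * (h 0 (Sum.inl a)) ^ 2) + 2) + 2 * lam) := by
    intro k a
    set bj : ℝ := 1 / (2 * μ) * (h 0 (Sum.inl a)) ^ 2 with hbj
    set u : Ω → ℝ := fun ω => Θ k ω a with hu
    set W : Ω → ℝ := fun ω => (N:ℝ)⁻¹ * ∑ i' : Fin N, T k i' ω (Sum.inl a) with hW
    set ξ : Ω → ℝ := G (k+1, Sum.inl a) with hξ
    set c : ℝ := Real.sqrt (2 * lam / (N:ℝ)) with hc
    have hrw : ∀ ω, Θ (k+1) ω a = (u ω - lam * W ω) + c * ξ ω := by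
      intro ω
      rw [hθcoord k a ω]
      simp only [hu, hW, hc, hξ]
      ring
    have hWl : MemLp W 2 P := by
      have hsum : MemLp (fun ω => ∑ i' : Fin N, T k i' ω (Sum.inl a)) 2 P := by
        have h0 := memLp_finset_sum' (μ := P) (p := 2) (Finset.univ : Finset (Fin N))
          (f := fun i' ω => T k i' ω (Sum.inl a)) (fun i' _ => by
            refine tipla_memℒp_tame h μ lam hμ hlam0 _
              (((hTmeas k i' (Sum.inl a)).mono (hmle k) le_rfl)) (hθl k a))
        convert h0 using 1
        funext ω
        simp [Finset.sum_apply]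
      exact hsum.const_mul _
    have hul : MemLp u 2 P := hθl k a
    have hA : MemLp (fun ω => u ω - lam * W ω) 2 P := hul.sub (hWl.const_mul lam)
    have hAmeas : Measurable[m k] fun ω => u ω - lam * W ω := by
      refine Measurable.sub ((inv k).1 a) ?_
      refine Measurable.const_mul (Measurable.const_mul ?_ _) _
      exact Finset.measurable_sum _ fun i' _ => hTmeas k i' (Sum.inl a)
    have hind : IndepFun (fun ω => u ω - lam * W ω) ξ P := by
      refine tipla_indep_from_past hGmeas hGindep
        {p : ℕ × (Fin dθ ⊕ Fin N × Fin dx) | p.1 ≤ k} ?_ hAmeas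
      simp
    have hstep := tipla_expect_step c hA (tipla_memℒp_of_gauss (hGmeas _) (hGlaw _))
      hind (tipla_mean_of_gauss (hGmeas _) (hGlaw _)) (tipla_var_of_gauss (hGmeas _) (hGlaw _))
    have heq : ∫ ω, (Θ (k+1) ω a) ^ 2 ∂P = ∫ ω, ((u ω - lam * W ω) + c * ξ ω) ^ 2 ∂P := by
      congr 1 with ω
      rw [hrw ω]
    have hdrift : ∀ ω, μ / 2 * (u ω) ^ 2 - bj ≤ W ω * u ω := by
      intro ω
      have hsum : (N:ℝ) * (μ / 2 * (u ω) ^ 2 - bj)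
          ≤ (∑ i' : Fin N, T k i' ω (Sum.inl a)) * u ω := by
        rw [Finset.sum_mul]
        have h1 : (N:ℝ) * (μ / 2 * (u ω) ^ 2 - bj)
            = ∑ _i' : Fin N, (μ / 2 * (u ω) ^ 2 - bj) := by
          rw [Finset.sum_const, Finset.card_univ, Fintype.card_fin, nsmul_eq_mul]
        rw [h1]
        exact Finset.sum_le_sum fun i' _ => hTdrift k i' ω (Sum.inl a)
      have h2 : W ω * u ω = (N:ℝ)⁻¹ * ((∑ i' : Fin N, T k i' ω (Sum.inl a)) * u ω) := by
        rw [hW]; ring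
      rw [h2]
      have h3 : μ / 2 * (u ω) ^ 2 - bj
          = (N:ℝ)⁻¹ * ((N:ℝ) * (μ / 2 * (u ω) ^ 2 - bj)) := by
        field_simp
      rw [h3]
      exact mul_le_mul_of_nonneg_left hsum (by positivity)
    have hbd : ∀ ω, |W ω| ≤ (Real.sqrt lam)⁻¹ + μ * |u ω| := by
      intro ω
      have h1 : |W ω| ≤ (N:ℝ)⁻¹ * ∑ i' : Fin N, |T k i' ω (Sum.inl a)| := by
        rw [hW, abs_mul, abs_of_nonneg (by positivity : (0:ℝ) ≤ (N:ℝ)⁻¹)]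
        exact mul_le_mul_of_nonneg_left (Finset.abs_sum_le_sum_abs _ _) (by positivity)
      have h2 : ∑ i' : Fin N, |T k i' ω (Sum.inl a)|
          ≤ ∑ _i' : Fin N, ((Real.sqrt lam)⁻¹ + μ * |u ω|) :=
        Finset.sum_le_sum fun i' _ => hTabs k i' ω (Sum.inl a)
      have h3 : ∑ _i' : Fin N, ((Real.sqrt lam)⁻¹ + μ * |u ω|)
          = (N:ℝ) * ((Real.sqrt lam)⁻¹ + μ * |u ω|) := by
        rw [Finset.sum_const, Finset.card_univ, Fintype.card_fin, nsmul_eq_mul]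
      have h4 : (N:ℝ)⁻¹ * ((N:ℝ) * ((Real.sqrt lam)⁻¹ + μ * |u ω|))
          = (Real.sqrt lam)⁻¹ + μ * |u ω| := by
        field_simp
      calc |W ω| ≤ (N:ℝ)⁻¹ * ∑ i' : Fin N, |T k i' ω (Sum.inl a)| := h1
        _ ≤ (N:ℝ)⁻¹ * ((N:ℝ) * ((Real.sqrt lam)⁻¹ + μ * |u ω|)) := by
            rw [← h3]
            exact mul_le_mul_of_nonneg_left h2 (by positivity)
        _ = _ := h4
    have hmono : ∫ ω, (u ω - lam * W ω) ^ 2 ∂P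
        ≤ ∫ ω, ((1 - lam * μ / 2) * (u ω) ^ 2 + lam * (2 * bj + 2)) ∂P := by
      refine integral_mono hA.integrable_sq ?_ fun ω => ?_
      · exact (hul.integrable_sq.const_mul _).add (integrable_const _)
      · exact tipla_key_alg μ lam (u ω) (W ω) bj hμ hlam0 hlm (hdrift ω) (hbd ω)
    have hmono2 : ∫ ω, ((1 - lam * μ / 2) * (u ω) ^ 2 + lam * (2 * bj + 2)) ∂P
        = (1 - lam * μ / 2) * ∫ ω, (u ω) ^ 2 ∂P + lam * (2 * bj + 2) := by
      rw [integral_add (hul.integrable_sq.const_mul _) (integrable_const _),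
        integral_const_mul, integral_const]
      simp [measure_univ]
    have hc2 : c ^ 2 ≤ 2 * lam := by
      rw [hc, Real.sq_sqrt (by positivity : (0:ℝ) ≤ 2 * lam / (N:ℝ))]
      exact div_le_self (by positivity) hN1
    rw [heq, hstep]
    rw [hmono2] at hmono
    linarith
  -- the one-step estimate, x coordinates
  have hxstep : ∀ k b, ∫ ω, (X (k+1) i ω b) ^ 2 ∂P
      ≤ (1 - lam * μ / 2) * ∫ ω, (X k i ω b) ^ 2 ∂P
        + (lam * (2 * (1 / (2 * μ) * (h 0 (Sum.inr b)) ^ 2) + 2) + 2 * lam) := by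
    intro k b
    set bj : ℝ := 1 / (2 * μ) * (h 0 (Sum.inr b)) ^ 2 with hbj
    set u : Ω → ℝ := fun ω => X k i ω b with hu
    set W : Ω → ℝ := fun ω => T k i ω (Sum.inr b) with hW
    set ξ : Ω → ℝ := G (k+1, Sum.inr (i, b)) with hξ
    set c : ℝ := Real.sqrt (2 * lam) with hc
    have hrw : ∀ ω, X (k+1) i ω b = (u ω - lam * W ω) + c * ξ ω := fun ω => hxcoord k i b ω
    have hWl : MemLp W 2 P :=
      tipla_memℒp_tame h μ lam hμ hlam0 _
        ((hTmeas k i (Sum.inr b)).mono (hmle k) le_rfl) (hxl k i b)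
    have hul : MemLp u 2 P := hxl k i b
    have hA : MemLp (fun ω => u ω - lam * W ω) 2 P := hul.sub (hWl.const_mul lam)
    have hAmeas : Measurable[m k] fun ω => u ω - lam * W ω :=
      Measurable.sub ((inv k).2.1 i b) ((hTmeas k i (Sum.inr b)).const_mul _)
    have hind : IndepFun (fun ω => u ω - lam * W ω) ξ P := by
      refine tipla_indep_from_past hGmeas hGindep
        {p : ℕ × (Fin dθ ⊕ Fin N × Fin dx) | p.1 ≤ k} ?_ hAmeas
      simp
    have hstep := tipla_expect_step c hA (tipla_memℒp_of_gauss (hGmeas _) (hGlaw _))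
      hind (tipla_mean_of_gauss (hGmeas _) (hGlaw _)) (tipla_var_of_gauss (hGmeas _) (hGlaw _))
    have heq : ∫ ω, (X (k+1) i ω b) ^ 2 ∂P = ∫ ω, ((u ω - lam * W ω) + c * ξ ω) ^ 2 ∂P := by
      congr 1 with ω
      rw [hrw ω]
    have hdrift : ∀ ω, μ / 2 * (u ω) ^ 2 - bj ≤ W ω * u ω := fun ω =>
      hTdrift k i ω (Sum.inr b)
    have hbd : ∀ ω, |W ω| ≤ (Real.sqrt lam)⁻¹ + μ * |u ω| := fun ω =>
      hTabs k i ω (Sum.inr b)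
    have hmono : ∫ ω, (u ω - lam * W ω) ^ 2 ∂P
        ≤ ∫ ω, ((1 - lam * μ / 2) * (u ω) ^ 2 + lam * (2 * bj + 2)) ∂P := by
      refine integral_mono hA.integrable_sq ?_ fun ω => ?_
      · exact (hul.integrable_sq.const_mul _).add (integrable_const _)
      · exact tipla_key_alg μ lam (u ω) (W ω) bj hμ hlam0 hlm (hdrift ω) (hbd ω)
    have hmono2 : ∫ ω, ((1 - lam * μ / 2) * (u ω) ^ 2 + lam * (2 * bj + 2)) ∂P
        = (1 - lam * μ / 2) * ∫ ω, (u ω) ^ 2 ∂P + lam * (2 * bj + 2) := by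
      rw [integral_add (hul.integrable_sq.const_mul _) (integrable_const _),
        integral_const_mul, integral_const]
      simp [measure_univ]
    have hc2 : c ^ 2 ≤ 2 * lam := by
      rw [hc, Real.sq_sqrt (by positivity : (0:ℝ) ≤ 2 * lam)]
    rw [heq, hstep]
    rw [hmono2] at hmono
    linarith
  -- the one-step estimate for the Lyapunov quantity
  have hstepS : ∀ k, Sf (k+1) ≤ (1 - lam * μ / 2) * Sf k + 2 * lam * B + 4 * lam * d := by
    intro k
    have h1 : ∑ a, ∫ ω, (Θ (k+1) ω a) ^ 2 ∂P
        ≤ ∑ a, ((1 - lam * μ / 2) * ∫ ω, (Θ k ω a) ^ 2 ∂P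
          + (lam * (2 * (1 / (2 * μ) * (h 0 (Sum.inl a)) ^ 2) + 2) + 2 * lam)) :=
      Finset.sum_le_sum fun a _ => hθstep k a
    have h2 : ∑ b, ∫ ω, (X (k+1) i ω b) ^ 2 ∂P
        ≤ ∑ b, ((1 - lam * μ / 2) * ∫ ω, (X k i ω b) ^ 2 ∂P
          + (lam * (2 * (1 / (2 * μ) * (h 0 (Sum.inr b)) ^ 2) + 2) + 2 * lam)) :=
      Finset.sum_le_sum fun b _ => hxstep k b
    have hsplit : B = (∑ a, 1 / (2 * μ) * (h 0 (Sum.inl a)) ^ 2)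
        + ∑ b, 1 / (2 * μ) * (h 0 (Sum.inr b)) ^ 2 := by
      rw [hB]
      exact Fintype.sum_sum_type _
    have e1 : ∑ a, ((1 - lam * μ / 2) * ∫ ω, (Θ k ω a) ^ 2 ∂P
          + (lam * (2 * (1 / (2 * μ) * (h 0 (Sum.inl a)) ^ 2) + 2) + 2 * lam))
        = (1 - lam * μ / 2) * (∑ a, ∫ ω, (Θ k ω a) ^ 2 ∂P)
          + 2 * lam * (∑ a, 1 / (2 * μ) * (h 0 (Sum.inl a)) ^ 2) + 4 * lam * dθ := by
      rw [Finset.sum_add_distrib, ← Finset.mul_sum]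
      have : ∀ a : Fin dθ, lam * (2 * (1 / (2 * μ) * (h 0 (Sum.inl a)) ^ 2) + 2) + 2 * lam
          = 2 * lam * (1 / (2 * μ) * (h 0 (Sum.inl a)) ^ 2) + 4 * lam := by
        intro a; ring
      rw [Finset.sum_congr rfl fun a _ => this a, Finset.sum_add_distrib, ← Finset.mul_sum,
        Finset.sum_const, Finset.card_univ, Fintype.card_fin, nsmul_eq_mul]
      ring
    have e2 : ∑ b, ((1 - lam * μ / 2) * ∫ ω, (X k i ω b) ^ 2 ∂P
          + (lam * (2 * (1 / (2 * μ) * (h 0 (Sum.inr b)) ^ 2) + 2) + 2 * lam))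
        = (1 - lam * μ / 2) * (∑ b, ∫ ω, (X k i ω b) ^ 2 ∂P)
          + 2 * lam * (∑ b, 1 / (2 * μ) * (h 0 (Sum.inr b)) ^ 2) + 4 * lam * dx := by
      rw [Finset.sum_add_distrib, ← Finset.mul_sum]
      have : ∀ b : Fin dx, lam * (2 * (1 / (2 * μ) * (h 0 (Sum.inr b)) ^ 2) + 2) + 2 * lam
          = 2 * lam * (1 / (2 * μ) * (h 0 (Sum.inr b)) ^ 2) + 4 * lam := by
        intro b; ring
      rw [Finset.sum_congr rfl fun b _ => this b, Finset.sum_add_distrib, ← Finset.mul_sum,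
        Finset.sum_const, Finset.card_univ, Fintype.card_fin, nsmul_eq_mul]
      ring
    rw [e1] at h1
    rw [e2] at h2
    rw [hSf, hd, hsplit]
    simp only []
    nlinarith [h1, h2]
  -- nonnegativity of the Lyapunov quantity
  have hSnn : ∀ k, 0 ≤ Sf k := by
    intro k
    refine add_nonneg (Finset.sum_nonneg fun a _ => ?_) (Finset.sum_nonneg fun b _ => ?_)
    · exact integral_nonneg fun ω => sq_nonneg _
    · exact integral_nonneg fun ω => sq_nonneg _
  -- uniform bound by induction
  have hbound : ∀ k, Sf k ≤ Sf 0 + (4 * B + 8 * d) / μ := by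
    intro k
    induction k with
    | zero =>
      have : 0 ≤ (4 * B + 8 * d) / μ :=
        div_nonneg (by linarith) hμ.le
      linarith
    | succ k ihk =>
      have hq : 0 ≤ 1 - lam * μ / 2 := by nlinarith
      have hfp : lam * μ / 2 * ((4 * B + 8 * d) / μ) = 2 * lam * B + 4 * lam * d := by
        field_simp
        ring
      have hc1 : (1 - lam * μ / 2) * Sf k ≤ (1 - lam * μ / 2) * (Sf 0 + (4 * B + 8 * d) / μ) :=
        mul_le_mul_of_nonneg_left ihk hq
      have hc2 : 0 ≤ lam * μ / 2 * Sf 0 :=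
        mul_nonneg (by positivity) (hSnn 0)
      have := hstepS k
      nlinarith [hfp, hc1, hc2]
  -- identification of norms with coordinate sums
  have hnorm : ∀ {κ : Type} [Fintype κ] (y : EuclideanSpace ℝ κ), ‖y‖ ^ 2 = ∑ a, (y a) ^ 2 := by
    intro κ _ y
    rw [EuclideanSpace.norm_eq, Real.sq_sqrt (Finset.sum_nonneg fun a _ => by positivity)]
    congr 1 with a
    rw [Real.norm_eq_abs, sq_abs]
  -- value of Sf 0
  have hSf0 : Sf 0 = ‖θ0‖ ^ 2 + ‖x0 i‖ ^ 2 := by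
    rw [hSf]
    simp only []
    rw [hnorm θ0, hnorm (x0 i)]
    congr 1
    · refine Finset.sum_congr rfl fun a _ => ?_
      simp only [hΘ0]
      simp [measure_univ]
    · refine Finset.sum_congr rfl fun b _ => ?_
      simp only [hX0]
      simp [measure_univ]
  -- value of B
  have hBval : B = ‖h 0‖ ^ 2 / (2 * μ) := by
    rw [hB, ← Finset.mul_sum, ← hnorm (h 0)]
    ring
  -- integrability of the norm expression
  have hintθ : ∀ a, Integrable (fun ω => (Θ n ω a) ^ 2) P := fun a => (hθl n a).integrable_sq
  have hintx : ∀ b, Integrable (fun ω => (X n i ω b) ^ 2) P := fun b => (hxl n i b).integrable_sq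
  have hfuneq : (fun ω => ‖Θ n ω‖ ^ 2 + ‖X n i ω‖ ^ 2)
      = fun ω => (∑ a, (Θ n ω a) ^ 2) + ∑ b, (X n i ω b) ^ 2 := by
    funext ω
    rw [hnorm (Θ n ω), hnorm (X n i ω)]
  have hintsum : Integrable (fun ω => ‖Θ n ω‖ ^ 2 + ‖X n i ω‖ ^ 2) P := by
    rw [hfuneq]
    exact (integrable_finset_sum _ fun a _ => hintθ a).add
      (integrable_finset_sum _ fun b _ => hintx b)
  have hval : ∫ ω, (‖Θ n ω‖ ^ 2 + ‖X n i ω‖ ^ 2) ∂P = Sf n := by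
    rw [hfuneq, integral_add (integrable_finset_sum _ fun a _ => hintθ a)
      (integrable_finset_sum _ fun b _ => hintx b),
      integral_finset_sum _ fun a _ => hintθ a, integral_finset_sum _ fun b _ => hintx b]
  have hLHS : ∫⁻ ω, ENNReal.ofReal (‖Θ n ω‖ ^ 2 + ‖X n i ω‖ ^ 2) ∂P
      = ENNReal.ofReal (∫ ω, (‖Θ n ω‖ ^ 2 + ‖X n i ω‖ ^ 2) ∂P) :=
    (ofReal_integral_eq_lintegral_ofReal hintsum
      (Filter.Eventually.of_forall fun ω => by positivity)).symm
  rw [hLHS]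
  refine ENNReal.ofReal_le_ofReal ?_
  rw [hval]
  -- final arithmetic
  have hfinal : Sf 0 + (4 * B + 8 * d) / μ
      ≤ (‖θ0‖ ^ 2 + ‖x0 i‖ ^ 2 + (8 / μ) * (‖h 0‖ ^ 2 / (2 * μ) + 1)) * (1 + (dθ : ℝ) + dx) := by
    rw [hSf0, ← hBval]
    have hS0 : 0 ≤ ‖θ0‖ ^ 2 + ‖x0 i‖ ^ 2 := by positivity
    have hdd : (1:ℝ) + (dθ : ℝ) + dx = 1 + d := by rw [hd]; ring
    rw [hdd]
    set S0 : ℝ := ‖θ0‖ ^ 2 + ‖x0 i‖ ^ 2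
    rw [div_eq_mul_inv, div_eq_mul_inv]
    have hr : (0:ℝ) ≤ μ⁻¹ := by positivity
    have hd0 : (0:ℝ) ≤ d := by linarith
    nlinarith [mul_nonneg hB0 hr, mul_nonneg hS0 hd0, mul_nonneg (mul_nonneg hB0 hr) hd0,
      mul_nonneg hr hd0]
  exact le_trans (hbound n) hfinal
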